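/- Let r^{(1)} be a function on ℝ lying in H^1(ℝ) ∩ L^{2,1}(ℝ), and let z₁ ∈ ℂ with Im(z₁) > 0. Then the function r^{(0)}(z) := r^{(1)}(z)·(z − conj(z₁))/(z − z₁) also belongs to H^1(ℝ) ∩ L^{2,1}(ℝ), and there is a constant c > 0 depending only on z₁ such that ‖r^{(0)}‖_{H^1 ∩ L^{2,1}} ≤ c‖r^{(1)}‖_{H^1 ∩ L^{2,1}}. -/

import Mathlib

open MeasureTheory Complex Filter
open scoped ENNReal

/-- Membership in `H¹(ℝ) ∩ L^{2,1}(ℝ)`: the function, its derivative, and its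
weighted version `⟨x⟩u(x)` are all in `L²`. -/
def MemH1L21 (u : ℝ → ℂ) : Prop :=
  MemLp u 2 (volume : Measure ℝ) ∧ Differentiable ℝ u ∧
    MemLp (deriv u) 2 (volume : Measure ℝ) ∧
    MemLp (fun x : ℝ => Real.sqrt (1 + x ^ 2) • u x) 2 (volume : Measure ℝ)

/-- The norm of `H¹(ℝ) ∩ L^{2,1}(ℝ)`. -/
noncomputable def normH1L21 (u : ℝ → ℂ) : ℝ≥0∞ :=
  eLpNorm u 2 volume + eLpNorm (deriv u) 2 volume +
    eLpNorm (fun x : ℝ => Real.sqrt (1 + x ^ 2) • u x) 2 volume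

open scoped NNReal ComplexConjugate

/-!
On the real line the Möbius factor `m(x) = (x - z̄₁)/(x - z₁)` has modulus one and derivative
`(z̄₁ - z₁)/(x - z₁)²`, bounded by `2 / |Im z₁|`. Multiplying by any such bounded multiplier with
bounded derivative preserves `L²` and the weighted `L²` norm up to `sup |m|`, while the product
rule `(u m)' = u' m + u m'` bounds the derivative by `sup |m| ‖u'‖ + sup |m'| ‖u‖`.
-/

section BoundedMultiplier

variable {α E : Type*} [MeasurableSpace α] {μ : Measure α} {p : ℝ≥0∞} [NormedRing E]
  {f m : α → E} {A : ℝ≥0}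

theorem eLpNorm_mul_le_of_norm_le (hm : ∀ x, ‖m x‖ ≤ A) :
    eLpNorm (fun x => f x * m x) p μ ≤ A * eLpNorm f p μ := by
  refine eLpNorm_le_nnreal_smul_eLpNorm_of_ae_le_mul (ae_of_all _ fun x => ?_) p
  calc ‖f x * m x‖₊ ≤ ‖f x‖₊ * ‖m x‖₊ := nnnorm_mul_le _ _
    _ ≤ ‖f x‖₊ * A := by gcongr; exact hm x
    _ = A * ‖f x‖₊ := mul_comm _ _

theorem MemLp.mul_of_norm_le (hf : MemLp f p μ) (hm_meas : AEStronglyMeasurable m μ)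
    (hm : ∀ x, ‖m x‖ ≤ A) : MemLp (fun x => f x * m x) p μ :=
  ⟨hf.1.mul hm_meas,
    (eLpNorm_mul_le_of_norm_le hm).trans_lt (ENNReal.mul_lt_top ENNReal.coe_lt_top hf.2)⟩

end BoundedMultiplier

section H1L21Multiplier

variable {u m : ℝ → ℂ} {A B : ℝ≥0}

theorem deriv_mul_fun (hu : Differentiable ℝ u) (hm : Differentiable ℝ m) :
    deriv (fun x => u x * m x) = fun x => deriv u x * m x + u x * deriv m x :=
  funext fun x => deriv_mul (hu x) (hm x)

theorem MemH1L21.mul_of_norm_le (hu : MemH1L21 u) (hm : Differentiable ℝ m)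
    (hA : ∀ x, ‖m x‖ ≤ A) (hB : ∀ x, ‖deriv m x‖ ≤ B) :
    MemH1L21 (fun x => u x * m x) := by
  obtain ⟨hu₂, hu_diff, hu'₂, hu_weight⟩ := hu
  have hm_meas : AEStronglyMeasurable m volume := hm.continuous.aestronglyMeasurable
  refine ⟨MemLp.mul_of_norm_le hu₂ hm_meas hA, hu_diff.mul hm, ?_, ?_⟩
  · rw [deriv_mul_fun hu_diff hm]
    exact (MemLp.mul_of_norm_le hu'₂ hm_meas hA).add
      (MemLp.mul_of_norm_le hu₂ (aestronglyMeasurable_deriv m _) hB)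
  · simp_rw [← smul_mul_assoc]
    exact MemLp.mul_of_norm_le hu_weight hm_meas hA

theorem normH1L21_mul_le (hu : MemH1L21 u) (hm : Differentiable ℝ m)
    (hA : ∀ x, ‖m x‖ ≤ A) (hB : ∀ x, ‖deriv m x‖ ≤ B) :
    normH1L21 (fun x => u x * m x) ≤ ↑(A + B) * normH1L21 u := by
  obtain ⟨hu₂, hu_diff, hu'₂, -⟩ := hu
  have h_deriv : eLpNorm (deriv fun x => u x * m x) 2 volume ≤
      A * eLpNorm (deriv u) 2 volume + B * eLpNorm u 2 volume := by
    rw [deriv_mul_fun hu_diff hm]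
    calc _ ≤ eLpNorm (fun x => deriv u x * m x) 2 volume +
          eLpNorm (fun x => u x * deriv m x) 2 volume :=
          eLpNorm_add_le (hu'₂.1.mul hm.continuous.aestronglyMeasurable)
            (hu₂.1.mul (aestronglyMeasurable_deriv m _)) one_le_two
      _ ≤ _ := add_le_add (eLpNorm_mul_le_of_norm_le hA) (eLpNorm_mul_le_of_norm_le hB)
  have h_weight : eLpNorm (fun x : ℝ => √(1 + x ^ 2) • (u x * m x)) 2 volume ≤
      A * eLpNorm (fun x : ℝ => √(1 + x ^ 2) • u x) 2 volume := by
    simp_rw [← smul_mul_assoc]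
    exact eLpNorm_mul_le_of_norm_le hA
  unfold normH1L21
  set a := eLpNorm u 2 volume
  set b := eLpNorm (deriv u) 2 volume
  set w := eLpNorm (fun x : ℝ => √(1 + x ^ 2) • u x) 2 volume
  calc _ ≤ A * a + (A * b + B * a) + A * w := by
        gcongr
        exact eLpNorm_mul_le_of_norm_le hA
    _ = A * (a + b + w) + B * a := by ring
    _ ≤ A * (a + b + w) + B * (a + b + w) := by
        gcongr
        exact le_self_add.trans le_self_add
    _ = ↑(A + B) * (a + b + w) := by push_cast; ring

end H1L21Multiplier

section MoebiusFactor

variable {z₁ : ℂ}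

noncomputable def moebiusFactor (z₁ : ℂ) (x : ℝ) : ℂ := (x - conj z₁) / (x - z₁)

theorem ofReal_sub_ne_zero_of_im_ne_zero (hz₁ : z₁.im ≠ 0) (x : ℝ) : (x : ℂ) - z₁ ≠ 0 :=
  fun h => hz₁ (by simpa using congrArg im h)

theorem norm_moebiusFactor (hz₁ : z₁.im ≠ 0) (x : ℝ) : ‖moebiusFactor z₁ x‖ = 1 := by
  have h_conj : (x : ℂ) - conj z₁ = conj ((x : ℂ) - z₁) := by simp
  rw [moebiusFactor, h_conj, norm_div, Complex.norm_conj,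
    div_self (norm_ne_zero_iff.2 (ofReal_sub_ne_zero_of_im_ne_zero hz₁ x))]

theorem hasDerivAt_moebiusFactor (hz₁ : z₁.im ≠ 0) (x : ℝ) :
    HasDerivAt (moebiusFactor z₁) ((conj z₁ - z₁) / ((x : ℂ) - z₁) ^ 2) x := by
  have h : HasDerivAt (fun w : ℂ => (w - conj z₁) / (w - z₁))
      ((1 * ((x : ℂ) - z₁) - ((x : ℂ) - conj z₁) * 1) / ((x : ℂ) - z₁) ^ 2) x :=
    ((hasDerivAt_id _).sub_const _).div ((hasDerivAt_id _).sub_const _)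
      (ofReal_sub_ne_zero_of_im_ne_zero hz₁ x)
  exact h.comp_ofReal.congr_deriv (by ring)

theorem differentiable_moebiusFactor (hz₁ : z₁.im ≠ 0) :
    Differentiable ℝ (moebiusFactor z₁) :=
  fun x => (hasDerivAt_moebiusFactor hz₁ x).differentiableAt

theorem norm_deriv_moebiusFactor_le (hz₁ : z₁.im ≠ 0) (x : ℝ) :
    ‖deriv (moebiusFactor z₁) x‖ ≤ 2 / |z₁.im| := by
  have h_num : ‖conj z₁ - z₁‖ = 2 * |z₁.im| := by
    rw [← neg_sub, norm_neg, sub_conj, norm_mul, Complex.norm_real, Complex.norm_I, mul_one,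
      Real.norm_eq_abs, abs_mul, abs_two]
  have h_den : |z₁.im| ≤ ‖(x : ℂ) - z₁‖ := by simpa using abs_im_le_norm ((x : ℂ) - z₁)
  have h_im : 0 < |z₁.im| := abs_pos.2 hz₁
  rw [(hasDerivAt_moebiusFactor hz₁ x).deriv, norm_div, norm_pow, h_num]
  calc 2 * |z₁.im| / ‖(x : ℂ) - z₁‖ ^ 2 ≤ 2 * |z₁.im| / |z₁.im| ^ 2 := by gcongr
    _ = 2 / |z₁.im| := by field_simp

end MoebiusFactor

/-- Multiplying by the Möbius factor `(z - z̄₁)/(z - z₁)`, `Im z₁ > 0`, preserves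
`H¹(ℝ) ∩ L^{2,1}(ℝ)` with a constant depending only on `z₁`. -/
theorem moebius_factor_preserves_H1L21 (z₁ : ℂ) (hz₁ : 0 < z₁.im) :
    ∃ c : ℝ≥0∞, 0 < c ∧ c ≠ ⊤ ∧ ∀ r₁ : ℝ → ℂ, MemH1L21 r₁ →
      MemH1L21 (fun z : ℝ => r₁ z * (((z : ℂ) - (starRingEnd ℂ) z₁) / ((z : ℂ) - z₁))) ∧
      normH1L21 (fun z : ℝ => r₁ z * (((z : ℂ) - (starRingEnd ℂ) z₁) / ((z : ℂ) - z₁)))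
        ≤ c * normH1L21 r₁ := by
  set B := (2 / |z₁.im|).toNNReal
  have hm := differentiable_moebiusFactor hz₁.ne'
  have hA (x : ℝ) : ‖moebiusFactor z₁ x‖ ≤ (1 : ℝ≥0) := by
    simp [norm_moebiusFactor hz₁.ne']
  have hB (x : ℝ) : ‖deriv (moebiusFactor z₁) x‖ ≤ B :=
    (norm_deriv_moebiusFactor_le hz₁.ne' x).trans (Real.le_coe_toNNReal _)
  refine ⟨↑(1 + B), ENNReal.coe_pos.2 (by positivity), ENNReal.coe_ne_top,
    fun r₁ hr₁ => ⟨hr₁.mul_of_norm_le (m := moebiusFactor z₁) hm hA hB,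
      normH1L21_mul_le (m := moebiusFactor z₁) hr₁ hm hA hB⟩⟩
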